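/- Let λ be an infinite cardinal and B a Boolean algebra such that for every nonzero x ∈ B, density(B ↾ x) = λ. If B ⊆ B' ⊆ comp(B) (the completion of B), then for every nonzero x ∈ B', density(B' ↾ x) = λ. -/
import Mathlib


/-- A (Boolean) subalgebra, as a subset. -/
def IsSubalg {C : Type*} [BooleanAlgebra C] (S : Set C) : Prop :=
  ⊥ ∈ S ∧ ⊤ ∈ S ∧ (∀ x ∈ S, ∀ y ∈ S, x ⊔ y ∈ S) ∧
    (∀ x ∈ S, ∀ y ∈ S, x ⊓ y ∈ S) ∧ (∀ x ∈ S, xᶜ ∈ S)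

/-- The density of `T ↾ x` for a subalgebra `T`: the least cardinality of a
set `D ⊆ T` of nonzero elements `≤ x` such that every nonzero `z ∈ T` with
`z ≤ x` has an element of `D` below it. -/
noncomputable def densIn {C : Type u} [BooleanAlgebra C] (T : Set C) (x : C) :
    Cardinal.{u} :=
  sInf {c | ∃ D : Set C, D ⊆ T ∧ (∀ d ∈ D, ⊥ < d ∧ d ≤ x) ∧
    (∀ z ∈ T, ⊥ < z → z ≤ x → ∃ d ∈ D, d ≤ z) ∧ Cardinal.mk D = c}

/-- Extract a witness dense set of cardinality `lam` from `densIn T x = lam`. -/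
lemma densIn_witness {C : Type u} [BooleanAlgebra C] (T : Set C) (x : C)
    (lam : Cardinal.{u}) (hlam : Cardinal.aleph0 ≤ lam) (h : densIn T x = lam) :
    ∃ D : Set C, D ⊆ T ∧ (∀ d ∈ D, ⊥ < d ∧ d ≤ x) ∧
      (∀ z ∈ T, ⊥ < z → z ≤ x → ∃ d ∈ D, d ≤ z) ∧ Cardinal.mk D = lam := by
  set A : Set Cardinal.{u} := {c | ∃ D : Set C, D ⊆ T ∧ (∀ d ∈ D, ⊥ < d ∧ d ≤ x) ∧
    (∀ z ∈ T, ⊥ < z → z ≤ x → ∃ d ∈ D, d ≤ z) ∧ Cardinal.mk D = c} with hA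
  have hne : A.Nonempty := by
    by_contra hemp
    rw [Set.not_nonempty_iff_eq_empty] at hemp
    have h0 : densIn T x = 0 := by
      rw [densIn, ← hA, hemp, Cardinal.sInf_empty]
    rw [h] at h0
    have hpos : (0 : Cardinal.{u}) < lam := lt_of_lt_of_le Cardinal.aleph0_pos hlam
    exact absurd h0.symm hpos.ne
  have hmem : sInf A ∈ A := csInf_mem hne
  have hfin : densIn T x ∈ A := hmem
  rw [h] at hfin
  exact hfin

/-- If `B ⊆ B' ⊆ comp B` (here: `S ⊆ T` are subalgebras of a complete Boolean
algebra `C` in which `S` is dense, i.e. `C` is the completion of `S`) and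
`density (S ↾ x) = λ` for every nonzero `x ∈ S`, then
`density (T ↾ x) = λ` for every nonzero `x ∈ T`. -/
theorem stmt_11 {C : Type u} [CompleteBooleanAlgebra C] (S T : Set C)
    (hS : IsSubalg S) (hT : IsSubalg T) (hST : S ⊆ T)
    (hdense : ∀ c : C, c ≠ ⊥ → ∃ s ∈ S, ⊥ < s ∧ s ≤ c)
    (lam : Cardinal.{u}) (hlam : Cardinal.aleph0 ≤ lam)
    (hSd : ∀ x ∈ S, x ≠ ⊥ → densIn S x = lam) :
    ∀ x ∈ T, x ≠ ⊥ → densIn T x = lam := by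
  intro x hxT hx
  have hxbot : ⊥ < x := bot_lt_iff_ne_bot.mpr hx
  have htop_ne : (⊤ : C) ≠ ⊥ := fun h => hx (le_bot_iff.mp (h ▸ le_top))
  -- dense subset of S (at ⊤) of size lam
  obtain ⟨D₀, hD₀S, hD₀pos, hD₀dense, hD₀card⟩ :=
    densIn_witness S ⊤ lam hlam (hSd ⊤ hS.2.1 htop_ne)
  -- maximal antichain of nonzero elements of S below x
  set P : Set C := {s | s ∈ S ∧ ⊥ < s ∧ s ≤ x} with hP
  set 𝒜 : Set (Set C) := {M | M ⊆ P ∧ M.Pairwise (fun a b => a ⊓ b = ⊥)} with h𝒜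
  obtain ⟨M, hM⟩ : ∃ M, Maximal (· ∈ 𝒜) M := by
    apply zorn_subset
    intro c hc hchain
    refine ⟨⋃₀ c, ⟨?_, ?_⟩, fun s hs => Set.subset_sUnion_of_mem hs⟩
    · intro a ha
      obtain ⟨m, hm, ham⟩ := ha
      exact (hc hm).1 ham
    · intro a ha b hb hab
      obtain ⟨m₁, hm₁, ha₁⟩ := ha
      obtain ⟨m₂, hm₂, hb₂⟩ := hb
      rcases hchain.total hm₁ hm₂ with h12 | h21
      · exact (hc hm₂).2 (h12 ha₁) hb₂ hab
      · exact (hc hm₁).2 ha₁ (h21 hb₂) hab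
  have hMP : M ⊆ P := hM.1.1
  have hMpair : M.Pairwise (fun a b => a ⊓ b = ⊥) := hM.1.2
  -- maximality: every element of P meets some element of M
  have hmax : ∀ s ∈ P, ∃ m ∈ M, s ⊓ m ≠ ⊥ := by
    intro s hs
    by_contra hcon
    push_neg at hcon
    have hins : insert s M ∈ 𝒜 := by
      constructor
      · exact Set.insert_subset hs hMP
      · intro a ha b hb hab
        rcases ha with rfl | ha
        · rcases hb with rfl | hb
          · exact absurd rfl hab
          · exact hcon b hb
        · rcases hb with rfl | hb
          · rw [inf_comm]; exact hcon a ha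
          · exact hMpair ha hb hab
    have : s ∈ M := hM.2 hins (Set.subset_insert s M) (Set.mem_insert s M)
    have := hcon s this
    rw [inf_idem] at this
    exact hs.2.1.ne' (le_bot_iff.mp this.le)
  -- |M| ≤ lam via injection into D₀
  have hMcard : Cardinal.mk M ≤ lam := by
    have hch : ∀ m : M, ∃ d ∈ D₀, d ≤ (m : C) := by
      intro ⟨m, hm⟩
      exact hD₀dense m (hMP hm).1 (hMP hm).2.1 le_top
    choose f hf1 hf2 using hch
    have hinj : Function.Injective fun m : M => (⟨f m, hf1 m⟩ : D₀) := by
      intro a b hab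
      by_contra hne
      have hane : (a : C) ≠ (b : C) := fun h => hne (Subtype.ext h)
      have hdisj := hMpair a.2 b.2 hane
      have : f a ≤ (a : C) ⊓ (b : C) := by
        have : f a = f b := congrArg Subtype.val hab
        exact le_inf (hf2 a) (this ▸ hf2 b)
      rw [hdisj, le_bot_iff] at this
      exact (hD₀pos _ (hf1 a)).1.ne' this
    calc Cardinal.mk M ≤ Cardinal.mk D₀ := Cardinal.mk_le_of_injective hinj
      _ = lam := hD₀card
  -- for each m ∈ M a dense set below m of size lam
  have hwit : ∀ m : M, ∃ D : Set C, D ⊆ S ∧ (∀ d ∈ D, ⊥ < d ∧ d ≤ (m : C)) ∧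
      (∀ z ∈ S, ⊥ < z → z ≤ (m : C) → ∃ d ∈ D, d ≤ z) ∧ Cardinal.mk D = lam := by
    intro ⟨m, hm⟩
    exact densIn_witness S m lam hlam (hSd m (hMP hm).1 (hMP hm).2.1.ne')
  choose F hF1 hF2 hF3 hF4 using hwit
  set D : Set C := ⋃ m : M, F m with hD
  have hDcard : Cardinal.mk D ≤ lam := by
    calc Cardinal.mk D ≤ Cardinal.mk M * ⨆ m : M, Cardinal.mk (F m) :=
          Cardinal.mk_iUnion_le F
      _ ≤ lam * lam := by
          apply mul_le_mul' hMcard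
          exact ciSup_le' fun m => (hF4 m).le
      _ = lam := Cardinal.mul_eq_self hlam
  -- D is dense below x in T
  have hDsub : D ⊆ T := by
    intro d hd
    obtain ⟨m, hdm⟩ := Set.mem_iUnion.mp hd
    exact hST (hF1 m hdm)
  have hDpos : ∀ d ∈ D, ⊥ < d ∧ d ≤ x := by
    intro d hd
    obtain ⟨m, hdm⟩ := Set.mem_iUnion.mp hd
    exact ⟨(hF2 m d hdm).1, le_trans (hF2 m d hdm).2 (hMP m.2).2.2⟩
  have hDdense : ∀ z ∈ T, ⊥ < z → z ≤ x → ∃ d ∈ D, d ≤ z := by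
    intro z hzT hz hzx
    obtain ⟨s, hsS, hs, hsz⟩ := hdense z hz.ne'
    have hsP : s ∈ P := ⟨hsS, hs, hsz.trans hzx⟩
    obtain ⟨m, hmM, hsm⟩ := hmax s hsP
    have hsmS : s ⊓ m ∈ S := hS.2.2.2.1 s hsS m (hMP hmM).1
    have hsmpos : ⊥ < s ⊓ m := bot_lt_iff_ne_bot.mpr hsm
    obtain ⟨d, hdF, hdsm⟩ := hF3 ⟨m, hmM⟩ (s ⊓ m) hsmS hsmpos inf_le_right
    refine ⟨d, Set.mem_iUnion.mpr ⟨⟨m, hmM⟩, hdF⟩, ?_⟩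
    exact le_trans hdsm (le_trans inf_le_left hsz)
  -- lower bound: every member of the densIn T x set is ≥ lam
  have hlb : ∀ c ∈ {c | ∃ D' : Set C, D' ⊆ T ∧ (∀ d ∈ D', ⊥ < d ∧ d ≤ x) ∧
      (∀ z ∈ T, ⊥ < z → z ≤ x → ∃ d ∈ D', d ≤ z) ∧ Cardinal.mk D' = c}, lam ≤ c := by
    rintro c ⟨D', hD'T, hD'pos, hD'dense, rfl⟩
    obtain ⟨s, hsS, hs, hsx⟩ := hdense x hx
    set D'' : Set C := {d ∈ D' | d ⊓ s ≠ ⊥} with hD''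
    have hech : ∀ d : D'', ∃ e ∈ S, ⊥ < e ∧ e ≤ (d : C) ⊓ s := by
      intro ⟨d, hd⟩
      exact hdense _ hd.2
    choose e he1 he2 he3 using hech
    set E : Set C := Set.range e with hE
    have hES : E ⊆ S := by
      rintro _ ⟨d, rfl⟩
      exact he1 d
    have hEpos : ∀ d ∈ E, ⊥ < d ∧ d ≤ s := by
      rintro _ ⟨d, rfl⟩
      exact ⟨he2 d, (he3 d).trans inf_le_right⟩
    have hEdense : ∀ z ∈ S, ⊥ < z → z ≤ s → ∃ d ∈ E, d ≤ z := by
      intro z hzS hz hzs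
      obtain ⟨d, hd, hdz⟩ := hD'dense z (hST hzS) hz (hzs.trans hsx)
      have hds : d ⊓ s ≠ ⊥ := by
        have : d ≤ s := hdz.trans hzs
        rw [inf_eq_left.mpr this]
        exact (hD'pos d hd).1.ne'
      refine ⟨e ⟨d, hd, hds⟩, ⟨⟨d, hd, hds⟩, rfl⟩, ?_⟩
      exact le_trans (he3 ⟨d, hd, hds⟩) (le_trans inf_le_left hdz)
    have : lam ≤ Cardinal.mk E := by
      have := hSd s hsS hs.ne'
      rw [← this, densIn]
      exact csInf_le' ⟨E, hES, hEpos, hEdense, rfl⟩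
    calc lam ≤ Cardinal.mk E := this
      _ ≤ Cardinal.mk D'' := Cardinal.mk_range_le
      _ ≤ Cardinal.mk D' := Cardinal.mk_le_mk_of_subset (Set.sep_subset _ _)
  -- conclude
  have hub : densIn T x ≤ lam := by
    have hmem : Cardinal.mk D ∈ {c | ∃ D' : Set C, D' ⊆ T ∧ (∀ d ∈ D', ⊥ < d ∧ d ≤ x) ∧
        (∀ z ∈ T, ⊥ < z → z ≤ x → ∃ d ∈ D', d ≤ z) ∧ Cardinal.mk D' = c} :=
      ⟨D, hDsub, hDpos, hDdense, rfl⟩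
    calc densIn T x ≤ Cardinal.mk D := csInf_le' hmem
      _ ≤ lam := hDcard
  have hlb' : lam ≤ densIn T x := by
    rw [densIn]
    exact le_csInf ⟨Cardinal.mk D, D, hDsub, hDpos, hDdense, rfl⟩ hlb
  exact le_antisymm hub hlb'
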